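/- arXiv:1905.02108 — 4 statements merged into one kernel-verified Lean document; each statement's English description precedes it below -/
import Mathlib

section
/- Let Γ(iω) = (k2 iω + k1)/((iω)² + (k1 t_h + k2)(iω) + k1) with k1 > 0, k2 ≥ 0, t_h > 0. Then |Γ(iω)| ≤ 1 for all real ω if and only if k1 t_h² + 2 k2 t_h ≥ 2. -/
open Complex

/-- String stability criterion for the zero-delay OVRV transfer function. -/
theorem stmt_2 (k1 k2 th : ℝ) (hk1 : 0 < k1) (hk2 : 0 ≤ k2) (hth : 0 < th) :
    (∀ ω : ℝ,
        ‖((k2 : ℂ) * (Complex.I * ω) + k1) /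
          ((Complex.I * ω) ^ 2 + ((k1 : ℂ) * th + k2) * (Complex.I * ω) + k1)‖ ≤ 1) ↔
      k1 * th ^ 2 + 2 * k2 * th ≥ 2 := by
  set c : ℝ := (k1 * th + k2) ^ 2 - k2 ^ 2 - 2 * k1 with hc
  have habs : ∀ ω : ℝ,
      ‖((k2 : ℂ) * (Complex.I * ω) + k1) /
        ((Complex.I * ω) ^ 2 + ((k1 : ℂ) * th + k2) * (Complex.I * ω) + k1)‖ ≤ 1
      ↔ 0 ≤ ω ^ 4 + c * ω ^ 2 := by
    intro ω
    have hnum : ((k2 : ℂ) * (Complex.I * ω) + k1)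
        = ((k1 : ℝ) : ℂ) + ((k2 * ω : ℝ) : ℂ) * Complex.I := by
      push_cast; ring
    have hden : ((Complex.I * ω) ^ 2 + ((k1 : ℂ) * th + k2) * (Complex.I * ω) + (k1 : ℂ))
        = (((k1 - ω ^ 2 : ℝ)) : ℂ) + (((k1 * th + k2) * ω : ℝ) : ℂ) * Complex.I := by
      push_cast
      have : Complex.I ^ 2 = -1 := Complex.I_sq
      ring_nf
      rw [this]; ring
    have hdenSq : Complex.normSq (((Complex.I * ω) ^ 2
        + ((k1 : ℂ) * th + k2) * (Complex.I * ω) + (k1 : ℂ)))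
        = (k1 - ω ^ 2) ^ 2 + ((k1 * th + k2) * ω) ^ 2 := by
      rw [hden, Complex.normSq_add_mul_I]
    have hnumSq : Complex.normSq ((k2 : ℂ) * (Complex.I * ω) + k1)
        = k1 ^ 2 + (k2 * ω) ^ 2 := by
      rw [hnum, Complex.normSq_add_mul_I]
    have hdpos : 0 < (k1 - ω ^ 2) ^ 2 + ((k1 * th + k2) * ω) ^ 2 := by
      rcases eq_or_ne ω 0 with h | h
      · subst h; simpa using by positivity
      · have hne : (k1 * th + k2) * ω ≠ 0 := mul_ne_zero (by positivity) h
        have h2 : (0:ℝ) < ((k1 * th + k2) * ω) ^ 2 :=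
          lt_of_le_of_ne (sq_nonneg _) (Ne.symm (pow_ne_zero 2 hne))
        nlinarith [sq_nonneg (k1 - ω ^ 2)]
    have hden0 : ((Complex.I * ω) ^ 2 + ((k1 : ℂ) * th + k2) * (Complex.I * ω) + (k1 : ℂ)) ≠ 0 := by
      intro h
      rw [← Complex.normSq_eq_zero, hdenSq] at h
      linarith
    rw [norm_div, div_le_one (by
      have := norm_pos_iff.mpr hden0
      exact this)]
    constructor
    · intro h
      have h2 := pow_le_pow_left₀ (norm_nonneg _) h 2
      rw [Complex.sq_norm, Complex.sq_norm, hnumSq, hdenSq] at h2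
      nlinarith
    · intro h
      have h2 : Complex.normSq ((k2 : ℂ) * (Complex.I * ω) + k1)
          ≤ Complex.normSq ((Complex.I * ω) ^ 2 + ((k1 : ℂ) * th + k2) * (Complex.I * ω) + (k1:ℂ)) := by
        rw [hnumSq, hdenSq]; nlinarith
      have := Real.sqrt_le_sqrt h2
      simpa [Complex.norm_def] using this
  constructor
  · intro h
    by_contra hlt
    push_neg at hlt
    have hcneg : c < 0 := by
      rw [hc]; nlinarith
    set ω := Real.sqrt (-c / 2) with hω
    have hω2 : ω ^ 2 = -c / 2 := Real.sq_sqrt (by linarith)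
    have := (habs ω).mp (h ω)
    nlinarith [this, hω2]
  · intro h ω
    rw [habs ω]
    have hcnn : 0 ≤ c := by rw [hc]; nlinarith
    nlinarith [sq_nonneg ω, sq_nonneg (ω ^ 2)]
end

section
/- For the zero-delay OVRV model with k1 > 0, k2 ≥ 0, t_h > 0, if the time headway satisfies t_h ≥ (−k2 + √(k2² + 2k1))/k1, then k1 t_h² + 2 k2 t_h − 2 ≥ 0, and hence the model is string stable (|Γ(iω)| ≤ 1 for all ω). -/
open Complex

/-- Sufficiently large time headway implies string stability of the zero-delay OVRV model. -/
theorem stmt_3 (k1 k2 th : ℝ) (hk1 : 0 < k1) (hk2 : 0 ≤ k2) (hth : 0 < th)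
    (h : th ≥ (-k2 + Real.sqrt (k2 ^ 2 + 2 * k1)) / k1) :
    k1 * th ^ 2 + 2 * k2 * th - 2 ≥ 0 ∧
      ∀ ω : ℝ,
        ‖((k2 : ℂ) * (Complex.I * ω) + k1) /
          ((Complex.I * ω) ^ 2 + ((k1 : ℂ) * th + k2) * (Complex.I * ω) + k1)‖ ≤ 1 := by
  have hs : Real.sqrt (k2 ^ 2 + 2 * k1) ≤ k1 * th + k2 := by
    have := (div_le_iff₀ hk1).mp h
    linarith
  have hsq : k2 ^ 2 + 2 * k1 ≤ (k1 * th + k2) ^ 2 := by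
    have h0 : 0 ≤ k2 ^ 2 + 2 * k1 := by positivity
    calc k2 ^ 2 + 2 * k1 = Real.sqrt (k2 ^ 2 + 2 * k1) ^ 2 := (Real.sq_sqrt h0).symm
      _ ≤ (k1 * th + k2) ^ 2 := by
          apply pow_le_pow_left₀ (Real.sqrt_nonneg _) hs
  have key : k1 * th ^ 2 + 2 * k2 * th - 2 ≥ 0 := by
    nlinarith [sq_nonneg (k1 * th + k2)]
  refine ⟨key, fun ω => ?_⟩
  rw [norm_div, div_le_one]
  · rw [Complex.norm_def, Complex.norm_def]
    apply Real.sqrt_le_sqrt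
    simp only [mul_pow, Complex.I_sq, ← Complex.ofReal_pow, Complex.neg_re, Complex.neg_im, Complex.one_re, Complex.one_im, Complex.normSq_apply, Complex.add_re, Complex.add_im, Complex.mul_re,
      Complex.mul_im, Complex.I_re, Complex.I_im, Complex.ofReal_re, Complex.ofReal_im]
    push_cast
    ring_nf
    nlinarith [sq_nonneg ω, sq_nonneg (ω ^ 2), mul_nonneg (mul_pos hk1 hk1).le (sq_nonneg ω),
      mul_nonneg (mul_nonneg hk1.le key) (sq_nonneg ω), sq_nonneg (k1 - ω ^ 2)]
  · have : (Complex.I * ω) ^ 2 + ((k1 : ℂ) * th + k2) * (Complex.I * ω) + k1 ≠ 0 := by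
      intro hz
      have hre : ((Complex.I * ω) ^ 2 + ((k1 : ℂ) * th + k2) * (Complex.I * ω) + k1).re = 0 := by
        rw [hz]; simp
      have him : ((Complex.I * ω) ^ 2 + ((k1 : ℂ) * th + k2) * (Complex.I * ω) + k1).im = 0 := by
        rw [hz]; simp
      simp only [mul_pow, Complex.I_sq, ← Complex.ofReal_pow, Complex.neg_re, Complex.neg_im, Complex.one_re, Complex.one_im, Complex.add_re, Complex.add_im, Complex.mul_re, Complex.mul_im, Complex.I_re,
        Complex.I_im, Complex.ofReal_re, Complex.ofReal_im] at hre him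
      ring_nf at hre him
      nlinarith [sq_nonneg ω, mul_pos hk1 hth]
    simpa using (norm_pos_iff.mpr this)
end

section
/- Suppose k1 > 0, k2 ≥ 0, t_h > 0 and k1 t_h² + 2 k2 t_h < 2. Then there exists ω > 0 with |Γ(iω)| > 1, where Γ(z) = (k2 z + k1)/(z² + (k1 t_h + k2) z + k1); in fact any ω with 0 < ω² < 2k1 − k1² t_h² − 2 k1 k2 t_h works. -/
open Complex

lemma aux_main (k1 k2 th : ℝ) (hk1 : 0 < k1) (hk2 : 0 ≤ k2) (hth : 0 < th)
    (ω : ℝ) (hω : 0 < ω ^ 2) (hωlt : ω ^ 2 < 2 * k1 - k1 ^ 2 * th ^ 2 - 2 * k1 * k2 * th) :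
    ‖(((k2 : ℂ) * (Complex.I * ω) + k1) /
      ((Complex.I * ω) ^ 2 + ((k1 : ℂ) * th + k2) * (Complex.I * ω) + k1))‖ > 1 := by
  set num : ℂ := (k2 : ℂ) * (Complex.I * ω) + k1 with hnum
  set den : ℂ := (Complex.I * ω) ^ 2 + ((k1 : ℂ) * th + k2) * (Complex.I * ω) + k1 with hden
  have hnsq : Complex.normSq num = k1 ^ 2 + k2 ^ 2 * ω ^ 2 := by
    simp [hnum, Complex.normSq_apply, Complex.add_re, Complex.add_im, Complex.mul_re,
      Complex.mul_im]
    ring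
  have hdsq : Complex.normSq den = (k1 - ω ^ 2) ^ 2 + (k1 * th + k2) ^ 2 * ω ^ 2 := by
    simp [hden, Complex.normSq_apply, Complex.add_re, Complex.add_im, Complex.mul_re,
      Complex.mul_im, pow_two]
    ring
  have hgt : Complex.normSq den < Complex.normSq num := by
    rw [hnsq, hdsq]
    nlinarith [sq_nonneg ω, mul_pos hω (sub_pos.mpr hωlt)]
  have hdpos : 0 < Complex.normSq den := by
    rw [hdsq]
    rcases eq_or_ne (k1 - ω ^ 2) 0 with h0 | h0
    · have : 0 < (k1 * th + k2) ^ 2 * ω ^ 2 := by positivity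
      nlinarith
    · nlinarith [sq_nonneg (k1 * th + k2), sq_nonneg ω, pow_two_pos_of_ne_zero h0]
  have hdne : den ≠ 0 := by
    intro h0; rw [h0] at hdpos; simp at hdpos
  rw [norm_div, gt_iff_lt, lt_div_iff₀ (norm_pos_iff.mpr hdne)]
  have h1 : ‖den‖ ^ 2 < ‖num‖ ^ 2 := by
    rwa [Complex.sq_norm, Complex.sq_norm]
  nlinarith [norm_nonneg num, norm_nonneg den]

/-- Violation of the headway condition yields string instability of the zero-delay OVRV model. -/
theorem stmt_5 (k1 k2 th : ℝ) (hk1 : 0 < k1) (hk2 : 0 ≤ k2) (hth : 0 < th)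
    (h : k1 * th ^ 2 + 2 * k2 * th < 2) :
    (∀ ω : ℝ, 0 < ω ^ 2 → ω ^ 2 < 2 * k1 - k1 ^ 2 * th ^ 2 - 2 * k1 * k2 * th →
        ‖(((k2 : ℂ) * (Complex.I * ω) + k1) /
          ((Complex.I * ω) ^ 2 + ((k1 : ℂ) * th + k2) * (Complex.I * ω) + k1))‖ > 1) ∧
      ∃ ω : ℝ, 0 < ω ∧
        ‖(((k2 : ℂ) * (Complex.I * ω) + k1) /
          ((Complex.I * ω) ^ 2 + ((k1 : ℂ) * th + k2) * (Complex.I * ω) + k1))‖ > 1 := by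
  have hc : 0 < 2 * k1 - k1 ^ 2 * th ^ 2 - 2 * k1 * k2 * th := by nlinarith
  refine ⟨fun ω hω hωlt => aux_main k1 k2 th hk1 hk2 hth ω hω hωlt, ?_⟩
  set c := 2 * k1 - k1 ^ 2 * th ^ 2 - 2 * k1 * k2 * th with hcdef
  refine ⟨Real.sqrt (c / 2), Real.sqrt_pos.mpr (by linarith), ?_⟩
  have hsq : Real.sqrt (c / 2) ^ 2 = c / 2 := Real.sq_sqrt (by linarith)
  exact aux_main k1 k2 th hk1 hk2 hth _ (by rw [hsq]; linarith) (by rw [hsq]; linarith)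
end

section
/- For the delayed OVRV model with k1 > 0, k2 ≥ 0, t_h > 0, τ > 0, if k1 t_h² + 2k2 t_h − 2 − 2τ(k1 t_h + k2) < 0 then there exists a real ω > 0 at which |−ω² + (k1 t_h + k2)iω + k1 e^{−iτω}|² < k2²ω² + k1², i.e., |Γ_τ(iω)| > 1, so the delayed model is string unstable. In particular, adding delay can destroy string stability: the condition is strictly stronger than the delay-free condition k1 t_h² + 2k2 t_h ≥ 2. -/
set_option maxHeartbeats 800000


open Complex

/-- Sufficient condition for string instability of the delayed OVRV model. -/
theorem stmt_11 (k1 k2 th τ : ℝ) (hk1 : 0 < k1) (hk2 : 0 ≤ k2) (hth : 0 < th) (hτ : 0 < τ)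
    (h : k1 * th ^ 2 + 2 * k2 * th - 2 - 2 * τ * (k1 * th + k2) < 0) :
    ∃ ω : ℝ, 0 < ω ∧
      (‖(((-(ω ^ 2) : ℝ) : ℂ) + ((k1 : ℂ) * th + k2) * (Complex.I * ω) +
          (k1 : ℂ) * Complex.exp (-(Complex.I * τ * ω)))‖) ^ 2 < k2 ^ 2 * ω ^ 2 + k1 ^ 2 ∧
      ‖(Complex.exp (-(Complex.I * τ * ω)) * ((k2 : ℂ) * (Complex.I * ω) + k1) /
        (((-(ω ^ 2) : ℝ) : ℂ) + ((k1 : ℂ) * th + k2) * (Complex.I * ω) +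
          (k1 : ℂ) * Complex.exp (-(Complex.I * τ * ω))))‖ > 1 := by
  set a : ℝ := k1 * th + k2 with ha
  have ha0 : 0 < a := by positivity
  set C : ℝ := k1 * (k1 * th ^ 2 + 2 * k2 * th - 2 - 2 * τ * a) with hCdef
  have hCneg : C < 0 := mul_neg_of_pos_of_neg hk1 h
  set B : ℝ := 1 + k1 * τ ^ 2 + a * k1 * τ ^ 3 / 2 with hBdef
  have hB0 : 0 < B := by positivity
  set δ : ℝ := min (min ((1 / τ) ^ 2) (k1 / (1 + k1 * τ ^ 2 / 2))) ((-C) / B) with hδdef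
  have hδ0 : 0 < δ := by
    apply lt_min (lt_min (by positivity) (by positivity))
    exact div_pos (by linarith) hB0
  set ω : ℝ := Real.sqrt (δ / 2) with hωdef
  have hω0 : 0 < ω := Real.sqrt_pos.mpr (by linarith)
  have hω2 : ω ^ 2 = δ / 2 := Real.sq_sqrt (by linarith)
  have hδ1 : δ ≤ (1 / τ) ^ 2 := le_trans (min_le_left _ _) (min_le_left _ _)
  have hδ2 : δ ≤ k1 / (1 + k1 * τ ^ 2 / 2) := le_trans (min_le_left _ _) (min_le_right _ _)
  have hδ3 : δ ≤ (-C) / B := min_le_right _ _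
  -- bounds on ω^2
  have hω2a : ω ^ 2 < (1 / τ) ^ 2 := by rw [hω2]; linarith
  have hω2b : ω ^ 2 < k1 / (1 + k1 * τ ^ 2 / 2) := by rw [hω2]; linarith
  have hω2c : ω ^ 2 < (-C) / B := by rw [hω2]; linarith
  have hτω1 : τ * ω ≤ 1 := by
    have hωle : ω ≤ 1 / τ := by
      nlinarith [sq_nonneg (ω - 1 / τ), one_div_pos.mpr hτ]
    calc τ * ω ≤ τ * (1 / τ) := by nlinarith
    _ = 1 := by field_simp
  have hτω0 : 0 < τ * ω := mul_pos hτ hω0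
  set c : ℝ := Real.cos (τ * ω) with hc
  set s : ℝ := Real.sin (τ * ω) with hs
  have hcb : 1 - (τ * ω) ^ 2 / 2 ≤ c := Real.one_sub_sq_div_two_le_cos
  have hsb : τ * ω - (τ * ω) ^ 3 / 4 < s := by
    have := Real.sin_gt_sub_cube hτω0
    linarith [pow_pos hτω0 3]
  have hpyth : s ^ 2 + c ^ 2 = 1 := Real.sin_sq_add_cos_sq (τ * ω)
  -- the exponential
  have hexp : Complex.exp (-(Complex.I * τ * ω)) = (c : ℂ) + (-s : ℝ) * Complex.I := by
    have h1 : -(Complex.I * (τ : ℂ) * (ω : ℂ)) = ((-(τ * ω) : ℝ) : ℂ) * Complex.I := by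
      push_cast; ring
    rw [h1, Complex.exp_mul_I, ← Complex.ofReal_cos, ← Complex.ofReal_sin,
      Real.cos_neg, Real.sin_neg]
  clear_value a C B δ ω c s
  -- the denominator as a + b I
  have hD : (((-(ω ^ 2) : ℝ) : ℂ) + ((k1 : ℂ) * th + k2) * (Complex.I * ω) +
      (k1 : ℂ) * Complex.exp (-(Complex.I * τ * ω)))
      = ((k1 * c - ω ^ 2 : ℝ) : ℂ) + ((a * ω - k1 * s : ℝ) : ℂ) * Complex.I := by
    rw [hexp, ha]; push_cast; ring
  have habsD : (‖(((-(ω ^ 2) : ℝ) : ℂ) + ((k1 : ℂ) * th + k2) * (Complex.I * ω) +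
      (k1 : ℂ) * Complex.exp (-(Complex.I * τ * ω)))‖) ^ 2
      = (k1 * c - ω ^ 2) ^ 2 + (a * ω - k1 * s) ^ 2 := by
    rw [hD, Complex.sq_norm, Complex.normSq_add_mul_I]
  -- main real inequality
  have hBC : ω ^ 2 * B + C < 0 := by
    have := (lt_div_iff₀ hB0).mp hω2c
    linarith
  have hmain : (k1 * c - ω ^ 2) ^ 2 + (a * ω - k1 * s) ^ 2 < k2 ^ 2 * ω ^ 2 + k1 ^ 2 := by
    have h1 : 2 * k1 * ω ^ 2 * (1 - (τ * ω) ^ 2 / 2) ≤ 2 * k1 * ω ^ 2 * c := by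
      apply mul_le_mul_of_nonneg_left hcb; positivity
    have h2 : 2 * a * k1 * ω * (τ * ω - (τ * ω) ^ 3 / 4) ≤ 2 * a * k1 * ω * s := by
      apply mul_le_mul_of_nonneg_left hsb.le; positivity
    have hk1c : k1 ^ 2 * (s ^ 2 + c ^ 2) = k1 ^ 2 := by rw [hpyth]; ring
    have hexpand : (k1 * c - ω ^ 2) ^ 2 + (a * ω - k1 * s) ^ 2 - (k2 ^ 2 * ω ^ 2 + k1 ^ 2)
        = ω ^ 4 - 2 * k1 * ω ^ 2 * c - 2 * a * k1 * ω * s + (a ^ 2 - k2 ^ 2) * ω ^ 2 := by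
      linear_combination (k1 ^ 2) * hpyth
    have hkey : ω ^ 4 - 2 * k1 * ω ^ 2 * c - 2 * a * k1 * ω * s + (a ^ 2 - k2 ^ 2) * ω ^ 2
        ≤ ω ^ 2 * (ω ^ 2 * B + C) := by
      have hE : ω ^ 2 * (ω ^ 2 * B + C) = ω ^ 4 - 2 * k1 * ω ^ 2 * (1 - (τ * ω) ^ 2 / 2)
          - 2 * a * k1 * ω * (τ * ω - (τ * ω) ^ 3 / 4) + (a ^ 2 - k2 ^ 2) * ω ^ 2 := by
        rw [hBdef, hCdef, ha]; ring
      linarith [h1, h2, hE]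
    have hfin : ω ^ 2 * (ω ^ 2 * B + C) < 0 :=
      mul_neg_of_pos_of_neg (by positivity) hBC
    linarith
  -- positivity of the denominator's real part
  have hx0 : 0 < k1 * c - ω ^ 2 := by
    have h3 := (lt_div_iff₀ (by positivity : (0:ℝ) < 1 + k1 * τ ^ 2 / 2)).mp hω2b
    have h4 : k1 * (1 - (τ * ω) ^ 2 / 2) ≤ k1 * c := mul_le_mul_of_nonneg_left hcb hk1.le
    linarith [h3, h4]
  have habsDpos : 0 < ‖(((-(ω ^ 2) : ℝ) : ℂ) + ((k1 : ℂ) * th + k2) * (Complex.I * ω) +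
      (k1 : ℂ) * Complex.exp (-(Complex.I * τ * ω)))‖ := by
    rw [hD]
    refine norm_pos_iff.mpr (Complex.normSq_pos.mp ?_)
    rw [Complex.normSq_add_mul_I]
    exact add_pos_of_pos_of_nonneg (pow_pos hx0 2) (sq_nonneg _)
  refine ⟨ω, hω0, by rw [habsD]; exact hmain, ?_⟩
  -- the quotient
  have hnum : (‖(Complex.exp (-(Complex.I * τ * ω)) * ((k2 : ℂ) * (Complex.I * ω) + k1))‖) ^ 2
      = k2 ^ 2 * ω ^ 2 + k1 ^ 2 := by
    rw [norm_mul]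
    have habse : ‖(Complex.exp (-(Complex.I * τ * ω)))‖ = 1 := by
      rw [Complex.norm_exp]
      norm_num [Complex.mul_re]
    rw [habse, one_mul]
    have hz : ((k2 : ℂ) * (Complex.I * ω) + k1) = ((k1 : ℝ) : ℂ) + ((k2 * ω : ℝ) : ℂ) * Complex.I := by
      push_cast; ring
    rw [hz, Complex.sq_norm, Complex.normSq_add_mul_I]
    ring
  rw [norm_div, gt_iff_lt, lt_div_iff₀ habsDpos, one_mul]
  have habsnn : 0 ≤ ‖(Complex.exp (-(Complex.I * τ * ω)) * ((k2 : ℂ) * (Complex.I * ω) + k1))‖ :=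
    norm_nonneg _
  have hsq : (‖(((-(ω ^ 2) : ℝ) : ℂ) + ((k1 : ℂ) * th + k2) * (Complex.I * ω) +
      (k1 : ℂ) * Complex.exp (-(Complex.I * τ * ω)))‖) ^ 2
      < (‖(Complex.exp (-(Complex.I * τ * ω)) * ((k2 : ℂ) * (Complex.I * ω) + k1))‖) ^ 2 := by
    rw [habsD, hnum]; exact hmain
  exact lt_of_pow_lt_pow_left₀ 2 habsnn hsq
end
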